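/- Let (κ₁, κ₂) ∈ ℂ² satisfy κ₁² = κ₂², κ₁κ₂ ≠ 0 and the moduli conditions. Then the six triple points of the arrangement M^{κ₁,κ₂}_γ given in homogeneous coordinates by (1:0:−κ₁⁻¹) = L₁∩L₈∩L₁₀, (1:0:−κ₂) = L₁∩L₁₁∩L₁₂, (0:1:−κ₁) = L₂∩L₈∩L₉, (0:1:−κ₂⁻¹) = L₂∩L₁₁∩L₁₃, (κ₁:−1:0) = L₃∩L₉∩L₁₀ and (1:−κ₂:0) = L₃∩L₁₂∩L₁₃ lie on a common smooth conic (i.e. there is a quadratic form on ℂ³ with nondegenerate associated symmetric bilinear form vanishing at representatives of all six points) if and only if κ₁ = κ₂. -/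

import Mathlib

/-!
Write a conic as `Q(x, y, z) = a x² + b y² + c z² + d xy + e xz + f yz`. If `κ₁ = -κ₂ = -κ`, the
two triple points on each coordinate line give two linear conditions whose sum is
`(κ² + 1)(a + c) = 0`, `(κ² + 1)(b + c) = 0`, `(κ² + 1)(a + b) = 0` respectively; as `κ² ≠ -1`
(this is `κ₁κ₂ ≠ 1`) this forces `a = b = c = 0` and then `d = e = f = 0`, so no conic, let alone
a smooth one, passes through the six points. If `κ₁ = κ₂ = κ`, the six points form one orbit of
the coordinate permutations up to scaling, and they lie on the symmetric conic
`κ (x² + y² + z²) + (κ² + 1)(xy + xz + yz) = 0`, whose determinant is a nonzero multiple of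
`(κ - 1)⁴ (κ² + κ + 1)`, hence nonzero because `κ³ ≠ 1`.
-/

noncomputable section

def ModuliCond (κ₁ κ₂ : ℂ) : Prop :=
  κ₁ ^ 3 ≠ 1 ∧ κ₂ ^ 3 ≠ 1 ∧ κ₁ * κ₂ ≠ 1 ∧
  (κ₁ = κ₂ →
    (2 * κ₁ ^ 2 + κ₁ + 1 ≠ 0 ∧ 2 * κ₁ ^ 2 + 2 * κ₁ + 1 ≠ 0 ∧ κ₁ ≠ -1/2 ∧
     κ₁ ^ 3 + 3 * κ₁ ^ 2 + 2 * κ₁ + 1 ≠ 0 ∧ κ₁ ^ 3 + 2 * κ₁ ^ 2 + κ₁ + 1 ≠ 0)) ∧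
  (κ₁ = -κ₂ →
    (κ₁ ^ 3 + κ₁ ^ 2 + 1 ≠ 0 ∧ κ₁ ^ 3 - κ₁ ^ 2 - 1 ≠ 0 ∧ 2 * κ₁ ^ 2 + 1 ≠ 0 ∧
     κ₁ ^ 3 + κ₁ - 1 ≠ 0 ∧ κ₁ ^ 3 + κ₁ + 1 ≠ 0))

theorem QuadraticMap.map_smul_add_smul_add_smul {R M : Type*} [CommRing R] [AddCommGroup M]
    [Module R M] (Q : QuadraticMap R M R) (x y z : R) (u v w : M) :
    Q (x • u + y • v + z • w) = x ^ 2 * Q u + y ^ 2 * Q v + z ^ 2 * Q w +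
      x * y * polar Q u v + x * z * polar Q u w + y * z * polar Q v w := by
  simp only [QuadraticMap.map_add Q, polar_add_left, polar_smul_left, polar_smul_right,
    QuadraticMap.map_smul, smul_eq_mul]
  ring

theorem Matrix.vec3_eq_smul_add_smul_add_smul {R : Type*} [Semiring R] (x y z : R) :
    ![x, y, z] = x • ![1, 0, 0] + y • ![0, 1, 0] + z • ![0, 0, 1] := by
  ext i; fin_cases i <;> simp

theorem Matrix.det_fin_three_of_diag_offDiag {R : Type*} [CommRing R] (a b : R) :
    !![a, b, b; b, a, b; b, b, a].det = (a - b) ^ 2 * (a + 2 * b) := by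
  simp only [Matrix.det_fin_three, Matrix.of_apply, Matrix.cons_val]
  ring

theorem Matrix.IsSymm.associated_toQuadraticForm' {R n : Type*} [CommRing R]
    [Invertible (2 : R)] [Fintype n] [DecidableEq n] {M : Matrix n n R} (hM : M.IsSymm) :
    M.toQuadraticForm'.associated = Matrix.toLinearMap₂' R M := by
  refine QuadraticMap.associated_left_inverse _ fun x y => ?_
  rw [Matrix.toLinearMap₂'_apply', Matrix.toLinearMap₂'_apply', Matrix.dotProduct_mulVec,
    ← Matrix.mulVec_transpose, hM.eq, dotProduct_comm]

theorem Matrix.IsSymm.nondegenerate_associated_toQuadraticForm'_iff {R n : Type*} [CommRing R]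
    [IsDomain R] [Invertible (2 : R)] [Fintype n] [DecidableEq n] {M : Matrix n n R}
    (hM : M.IsSymm) : M.toQuadraticForm'.associated.Nondegenerate ↔ M.det ≠ 0 := by
  rw [hM.associated_toQuadraticForm', LinearMap.nondegenerate_toLinearMap₂'_iff_det_ne_zero]

section TriplePoints

open QuadraticMap

variable {K : Type*} [Field K]

def VanishesAtTriplePoints (κ₁ κ₂ : K) (Q : QuadraticForm K (Fin 3 → K)) : Prop :=
  Q ![1, 0, -κ₁⁻¹] = 0 ∧ Q ![1, 0, -κ₂] = 0 ∧
  Q ![0, 1, -κ₁] = 0 ∧ Q ![0, 1, -κ₂⁻¹] = 0 ∧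
  Q ![κ₁, -1, 0] = 0 ∧ Q ![1, -κ₂, 0] = 0

theorem VanishesAtTriplePoints.eq_zero_of_neg {κ : K} {Q : QuadraticForm K (Fin 3 → K)}
    (h2 : (2 : K) ≠ 0) (hκ : κ ≠ 0) (hκ' : κ ^ 2 + 1 ≠ 0)
    (hQ : VanishesAtTriplePoints (-κ) κ Q) : Q = 0 := by
  set e₀ : Fin 3 → K := ![1, 0, 0]
  set e₁ : Fin 3 → K := ![0, 1, 0]
  set e₂ : Fin 3 → K := ![0, 0, 1]
  have hQ_apply (x y z : K) : Q ![x, y, z] = x ^ 2 * Q e₀ + y ^ 2 * Q e₁ + z ^ 2 * Q e₂ +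
      x * y * polar Q e₀ e₁ + x * z * polar Q e₀ e₂ + y * z * polar Q e₁ e₂ := by
    rw [Matrix.vec3_eq_smul_add_smul_add_smul, QuadraticMap.map_smul_add_smul_add_smul]
  obtain ⟨h₁, h₂, h₃, h₄, h₅, h₆⟩ := hQ
  simp only [hQ_apply, neg_neg, inv_neg] at h₁ h₂ h₃ h₄ h₅ h₆
  field_simp at h₁ h₄
  have h₀₂ : Q e₀ + Q e₂ = 0 := (mul_eq_zero.1 (by linear_combination h₁ + h₂)).resolve_left hκ'
  have h₁₂ : Q e₁ + Q e₂ = 0 := (mul_eq_zero.1 (by linear_combination h₃ + h₄)).resolve_left hκ'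
  have h₀₁ : Q e₀ + Q e₁ = 0 := (mul_eq_zero.1 (by linear_combination h₅ + h₆)).resolve_left hκ'
  have hQe₀ : Q e₀ = 0 :=
    (mul_eq_zero.1 (by linear_combination h₀₂ + h₀₁ - h₁₂ : 2 * Q e₀ = 0)).resolve_left h2
  have hQe₁ : Q e₁ = 0 := by linear_combination h₀₁ - hQe₀
  have hQe₂ : Q e₂ = 0 := by linear_combination h₀₂ - hQe₀
  have hp₀₁ : polar Q e₀ e₁ = 0 := (mul_eq_zero.1 (by
    linear_combination -h₆ + hQe₀ + κ ^ 2 * hQe₁ : κ * polar Q e₀ e₁ = 0)).resolve_left hκ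
  have hp₀₂ : polar Q e₀ e₂ = 0 := (mul_eq_zero.1 (by
    linear_combination -h₂ + hQe₀ + κ ^ 2 * hQe₂ : κ * polar Q e₀ e₂ = 0)).resolve_left hκ
  have hp₁₂ : polar Q e₁ e₂ = 0 := (mul_eq_zero.1 (by
    linear_combination h₃ - hQe₁ - κ ^ 2 * hQe₂ : κ * polar Q e₁ e₂ = 0)).resolve_left hκ
  ext v
  rw [show v = ![v 0, v 1, v 2] by ext i; fin_cases i <;> rfl, hQ_apply]
  simp [hQe₀, hQe₁, hQe₂, hp₀₁, hp₀₂, hp₁₂]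

def triplePointConicMatrix (κ : K) : Matrix (Fin 3) (Fin 3) K :=
  !![2 * κ, κ ^ 2 + 1, κ ^ 2 + 1; κ ^ 2 + 1, 2 * κ, κ ^ 2 + 1; κ ^ 2 + 1, κ ^ 2 + 1, 2 * κ]

theorem isSymm_triplePointConicMatrix (κ : K) : (triplePointConicMatrix κ).IsSymm := by
  ext i j
  fin_cases i <;> fin_cases j <;> rfl

theorem det_triplePointConicMatrix (κ : K) :
    (triplePointConicMatrix κ).det = 2 * (κ - 1) ^ 4 * (κ ^ 2 + κ + 1) := by
  rw [triplePointConicMatrix, Matrix.det_fin_three_of_diag_offDiag]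
  ring

theorem toQuadraticForm'_triplePointConicMatrix_apply (κ x y z : K) :
    (triplePointConicMatrix κ).toQuadraticForm' ![x, y, z] =
      2 * (κ * (x ^ 2 + y ^ 2 + z ^ 2) + (κ ^ 2 + 1) * (x * y + x * z + y * z)) := by
  rw [Matrix.toQuadraticForm', LinearMap.BilinMap.toQuadraticMap_apply,
    Matrix.toLinearMap₂'_apply', triplePointConicMatrix, Matrix.vec3_dotProduct]
  simp only [Matrix.mulVec, Matrix.vec3_dotProduct, Matrix.of_apply, Matrix.cons_val]
  ring

theorem vanishesAtTriplePoints_toQuadraticForm'_triplePointConicMatrix {κ : K} (hκ : κ ≠ 0) :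
    VanishesAtTriplePoints κ κ (triplePointConicMatrix κ).toQuadraticForm' := by
  refine ⟨?_, ?_, ?_, ?_, ?_, ?_⟩ <;>
  · rw [toQuadraticForm'_triplePointConicMatrix_apply]
    field_simp
    ring

end TriplePoints

/--
For `(κ₁, κ₂)` with `κ₁² = κ₂²`, `κ₁κ₂ ≠ 0` and the moduli conditions,
the six triple points `(1:0:−κ₁⁻¹), (1:0:−κ₂), (0:1:−κ₁), (0:1:−κ₂⁻¹), (κ₁:−1:0),
(1:−κ₂:0)` of `M^{κ₁,κ₂}_γ` lie on a common smooth conic — i.e. some quadratic form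
on `ℂ³` with nondegenerate associated symmetric bilinear form vanishes at
representatives of all six points — if and only if `κ₁ = κ₂`.
-/
theorem stmt_13 (κ₁ κ₂ : ℂ) (hsq : κ₁ ^ 2 = κ₂ ^ 2) (h0 : κ₁ * κ₂ ≠ 0)
    (hm : ModuliCond κ₁ κ₂) :
    (∃ Q : QuadraticForm ℂ (Fin 3 → ℂ),
      (QuadraticMap.associated (R := ℂ) Q).Nondegenerate ∧
      Q ![1, 0, -κ₁⁻¹] = 0 ∧ Q ![1, 0, -κ₂] = 0 ∧
      Q ![0, 1, -κ₁] = 0 ∧ Q ![0, 1, -κ₂⁻¹] = 0 ∧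
      Q ![κ₁, -1, 0] = 0 ∧ Q ![1, -κ₂, 0] = 0) ↔ κ₁ = κ₂ := by
  constructor
  · rintro ⟨Q, hnd, hQ⟩
    by_contra hne
    obtain rfl : κ₁ = -κ₂ := (sq_eq_sq_iff_eq_or_eq_neg.1 hsq).resolve_left hne
    have hκ₂ : κ₂ ^ 2 + 1 ≠ 0 := fun h => hm.2.2.1 (by linear_combination -h)
    obtain rfl :=
      VanishesAtTriplePoints.eq_zero_of_neg two_ne_zero (right_ne_zero_of_mul h0) hκ₂ hQ
    exact hnd.1.ne_zero (map_zero _)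
  · rintro rfl
    have hκ₁ : (κ₁ - 1) * (κ₁ ^ 2 + κ₁ + 1) ≠ 0 := fun h => hm.1 (by linear_combination h)
    obtain ⟨hκ₁_ne_one, hκ₁_cyclo⟩ := mul_ne_zero_iff.1 hκ₁
    refine ⟨_, ?_, vanishesAtTriplePoints_toQuadraticForm'_triplePointConicMatrix
      (left_ne_zero_of_mul h0)⟩
    rw [(isSymm_triplePointConicMatrix κ₁).nondegenerate_associated_toQuadraticForm'_iff,
      det_triplePointConicMatrix]
    exact mul_ne_zero (mul_ne_zero two_ne_zero (pow_ne_zero _ hκ₁_ne_one)) hκ₁_cyclo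

end
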